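/- Let 0 < q < 1 and let f : [0,1] → ℝ be continuous. Then for all n ≥ 1 and all x with 0 ≤ x < 1: |R_{n,q}(f,x) − R_{∞,q}(f,x)| ≤ (2/(1−q)) · (1/(1−x)) · ω(f, q^n). -/

import Mathlib

open Finset Filter

noncomputable section

/-- The q-integer `[n]_q = 1 + q + ⋯ + q^(n-1)`. -/
def qInt (q : ℝ) (n : ℕ) : ℝ := ∑ i ∈ Finset.range n, q ^ i

/-- The q-factorial `[n]_q!`. -/
def qFact (q : ℝ) : ℕ → ℝ
  | 0 => 1
  | n + 1 => qFact q n * qInt q (n + 1)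

/-- The q-binomial coefficient `[n k]_q`. -/
def qBinom (q : ℝ) (n k : ℕ) : ℝ := qFact q n / (qFact q k * qFact q (n - k))

/-- The Lupaş basis function `b_{nk}(q;x)`. -/
def lupasB (q : ℝ) (n k : ℕ) (x : ℝ) : ℝ :=
  qBinom q n k * q ^ (k * (k - 1) / 2) * x ^ k * (1 - x) ^ (n - k) /
    ∏ j ∈ Finset.range (n - 1), (1 - x + q ^ (j + 1) * x)

/-- The limit Lupaş basis function `b_{∞k}(q;x)` (for `0 < q < 1`, `x ∈ [0,1)`). -/
def lupasBInf (q : ℝ) (k : ℕ) (x : ℝ) : ℝ :=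
  q ^ (k * (k - 1) / 2) * (x / (1 - x)) ^ k /
    ((1 - q) ^ k * qFact q k * ∏' j : ℕ, (1 + q ^ j * (x / (1 - x))))

/-- The Lupaş q-analogue of the Bernstein operator `R_{n,q}(f,x)`. -/
def lupasR (q : ℝ) (n : ℕ) (f : ℝ → ℝ) (x : ℝ) : ℝ :=
  ∑ k ∈ Finset.range (n + 1), f (qInt q k / qInt q n) * lupasB q n k x

/-- The limit q-Lupaş operator `R_{∞,q}(f,x)` for `0 < q < 1`. -/
def lupasRInfLow (q : ℝ) (f : ℝ → ℝ) (x : ℝ) : ℝ :=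
  if x = 1 then f 1 else ∑' k : ℕ, f (1 - q ^ k) * lupasBInf q k x

/-- The limit q-Lupaş operator `R_{∞,q}(f,x)`: for `q > 1` it is defined by
reflection, `R_{∞,q}(f,x) = R_{∞,1/q}(g,1-x)` with `g(x) = f(1-x)`. -/
def lupasRInf (q : ℝ) (f : ℝ → ℝ) (x : ℝ) : ℝ :=
  if 1 < q then lupasRInfLow (1 / q) (fun t => f (1 - t)) (1 - x)
  else lupasRInfLow q f x

/-- The transform `v(q,x) = qx/(1-x+qx)`. -/
def vq (q x : ℝ) : ℝ := q * x / (1 - x + q * x)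

/-- `L_{n,q}(f,x) = R_{n,q}(f,x) - R_{∞,q}(f,x)`. -/
def lupasL (q : ℝ) (n : ℕ) (f : ℝ → ℝ) (x : ℝ) : ℝ :=
  lupasR q n f x - lupasRInf q f x

/-- The modulus of continuity `ω(f,t)` of `f` on `[0,1]`. -/
def omega1 (f : ℝ → ℝ) (t : ℝ) : ℝ :=
  sSup {d | ∃ x ∈ Set.Icc (0:ℝ) 1, ∃ y ∈ Set.Icc (0:ℝ) 1, |x - y| ≤ t ∧ d = |f x - f y|}

/-- The second modulus of smoothness `ω₂(f,t)` of `f` on `[0,1]`. -/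
def omega2 (f : ℝ → ℝ) (t : ℝ) : ℝ :=
  sSup {d | ∃ h, 0 ≤ h ∧ h ≤ t ∧ ∃ x, 0 ≤ x ∧ x ≤ 1 - 2 * h ∧
    d = |f (x + 2 * h) - 2 * f (x + h) + f x|}

/-!
Write `u = x / (1 - x)`. Then `b_{nk}(q;x) = [n k]_q q^(k choose 2) u^k / ∏_{j<n} (1 + q^j u)`,
and by Euler's identity `∏_j (1 + q^j u) = ∑_k q^(k choose 2) u^k / ((1-q)⋯(1-q^k))` the limit
weights `b_{∞k}(q;x)` form a probability distribution on `ℕ`. Splitting off the first `n` factors,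
`∏_j (1 + q^j u) = ∏_{j<n} (1 + q^j u) · ∏_j (1 + q^j (q^n u))`, shows that this distribution is
the convolution of the finite Lupaş weights with the limit weights at `q^n u`. Hence
`R_{n,q} f - R_{∞,q} f` is an average over `k ≤ n` of `f([k]/[n]) - ∑_m f(1 - q^(k+m)) b_m`,
where `b` is the limit distribution at `q^n u`. Finally
`|[k]/[n] - (1 - q^(k+m))| ≤ q^n/(1-q^n) + (1 - q^m)`, the first moment `∑_m (1 - q^m) b_m` is
`q^n u/(1 + q^n u) ≤ q^n u`, and `|f s - f t| ≤ (1 + |s - t|/ε) ω(f, ε)` with `ε = q^n`.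
-/

open Topology

section QArith

variable {q : ℝ}

lemma qInt_pos (hq : 0 < q) {n : ℕ} (hn : n ≠ 0) : 0 < qInt q n :=
  sum_pos (fun i _ => pow_pos hq i) (nonempty_range_iff.2 hn)

lemma one_sub_mul_qInt (q : ℝ) (n : ℕ) : (1 - q) * qInt q n = 1 - q ^ n := by
  rw [qInt, mul_comm, geom_sum_mul_neg]

lemma qInt_add (q : ℝ) (a b : ℕ) : qInt q (a + b) = qInt q a + q ^ a * qInt q b := by
  simp only [qInt, sum_range_add, pow_add, mul_sum]

lemma qInt_div_qInt (hq : q ≠ 1) (k n : ℕ) :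
    qInt q k / qInt q n = (1 - q ^ k) / (1 - q ^ n) := by
  rw [← one_sub_mul_qInt, ← one_sub_mul_qInt, mul_div_mul_left _ _ (sub_ne_zero.2 hq.symm)]

lemma qFact_pos (hq : 0 < q) (n : ℕ) : 0 < qFact q n := by
  induction n with
  | zero => exact one_pos
  | succ n ih => exact mul_pos ih (qInt_pos hq n.succ_ne_zero)

lemma qBinom_pos (hq : 0 < q) (n k : ℕ) : 0 < qBinom q n k :=
  div_pos (qFact_pos hq n) (mul_pos (qFact_pos hq k) (qFact_pos hq _))

lemma qBinom_zero_right (hq : 0 < q) (n : ℕ) : qBinom q n 0 = 1 := by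
  simp [qBinom, qFact, (qFact_pos hq n).ne']

lemma qBinom_self (hq : 0 < q) (n : ℕ) : qBinom q n n = 1 := by
  simp [qBinom, qFact, (qFact_pos hq n).ne']

lemma qBinom_succ_succ (hq : 0 < q) {n k : ℕ} (hk : k < n) :
    qBinom q (n + 1) (k + 1) = qBinom q n (k + 1) + q ^ (n - k) * qBinom q n k := by
  obtain ⟨m, rfl⟩ : ∃ m, n = k + 1 + m := ⟨n - (k + 1), by omega⟩
  have hsplit : qInt q (k + 1 + m + 1) = qInt q (m + 1) + q ^ (m + 1) * qInt q (k + 1) := by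
    rw [show k + 1 + m + 1 = (m + 1) + (k + 1) by ring, qInt_add]
  have h1 : k + 1 + m + 1 - (k + 1) = m + 1 := by omega
  have h2 : k + 1 + m - (k + 1) = m := by omega
  have h3 : k + 1 + m - k = m + 1 := by omega
  have hqk := (qInt_pos hq k.succ_ne_zero).ne'
  have hqm := (qInt_pos hq m.succ_ne_zero).ne'
  simp only [qBinom, h1, h2, h3, qFact]
  rw [hsplit]
  field_simp

end QArith

section Gauss

variable {q : ℝ}

-- `qBinom q n k` does not vanish for `k > n` (truncated subtraction), hence the cutoff.
def gaussCoeff (q : ℝ) (n k : ℕ) : ℝ :=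
  if k ≤ n then qBinom q n k * q ^ k.choose 2 else 0

lemma gaussCoeff_nonneg (hq : 0 < q) (n k : ℕ) : 0 ≤ gaussCoeff q n k := by
  unfold gaussCoeff
  split_ifs
  · exact mul_nonneg (qBinom_pos hq n k).le (pow_nonneg hq.le _)
  · exact le_rfl

lemma gaussCoeff_of_lt {n k : ℕ} (h : n < k) : gaussCoeff q n k = 0 :=
  if_neg (not_le.2 h)

lemma gaussCoeff_zero_right (hq : 0 < q) (n : ℕ) : gaussCoeff q n 0 = 1 := by
  simp [gaussCoeff, qBinom_zero_right hq]

lemma gaussCoeff_succ_succ (hq : 0 < q) (n k : ℕ) :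
    gaussCoeff q (n + 1) (k + 1) = gaussCoeff q n (k + 1) + q ^ n * gaussCoeff q n k := by
  have hchoose : (k + 1).choose 2 = k + k.choose 2 := by
    rw [Nat.choose_succ_succ', Nat.choose_one_right]
  unfold gaussCoeff
  rcases lt_trichotomy k n with h | rfl | h
  · rw [if_pos (by omega), if_pos (by omega), if_pos h.le, qBinom_succ_succ hq h, hchoose]
    have : q ^ (n - k) * q ^ k = q ^ n := by rw [← pow_add, Nat.sub_add_cancel h.le]
    linear_combination qBinom q n k * q ^ k.choose 2 * this
  · rw [if_pos le_rfl, if_neg (by omega), if_pos le_rfl, qBinom_self hq, qBinom_self hq, hchoose,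
      pow_add]
    ring
  · rw [if_neg (by omega), if_neg (by omega), if_neg (by omega)]
    ring

open PowerSeries in
lemma coeff_prod_one_add_C_mul_X (hq : 0 < q) (u : ℝ) (n k : ℕ) :
    coeff k (∏ j ∈ range n, (1 + C (q ^ j * u) * X)) = gaussCoeff q n k * u ^ k := by
  induction n generalizing k with
  | zero =>
    rcases k with _ | k
    · simp [gaussCoeff_zero_right hq]
    · simp [coeff_one, gaussCoeff_of_lt (Nat.succ_pos k)]
  | succ n ih =>
    rw [prod_range_succ, mul_add, mul_one, mul_left_comm, ← mul_assoc, map_add]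
    rcases k with _ | k
    · simp [gaussCoeff_zero_right hq]
    · rw [coeff_succ_mul_X, coeff_C_mul, ih, ih, gaussCoeff_succ_succ hq]
      ring

end Gauss

section Euler

variable {q : ℝ}

/-- `(-u; q)_n` in q-Pochhammer notation. -/
def qProd (q u : ℝ) (n : ℕ) : ℝ := ∏ j ∈ range n, (1 + q ^ j * u)

def qProdInf (q u : ℝ) : ℝ := ∏' j : ℕ, (1 + q ^ j * u)

lemma qProd_pos (hq : 0 < q) {u : ℝ} (hu : 0 ≤ u) (n : ℕ) : 0 < qProd q u n :=
  prod_pos fun j _ => by positivity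

lemma hasProd_qProdInf (hq0 : 0 < q) (hq1 : q < 1) (u : ℝ) :
    HasProd (fun j : ℕ => 1 + q ^ j * u) (qProdInf q u) :=
  (Real.multipliable_one_add_of_summable
    ((summable_geometric_of_lt_one hq0.le hq1).mul_right u)).hasProd

lemma one_le_qProdInf (hq0 : 0 < q) (hq1 : q < 1) {u : ℝ} (hu : 0 ≤ u) : 1 ≤ qProdInf q u :=
  ge_of_tendsto (hasProd_qProdInf hq0 hq1 u).tendsto_prod_nat <| Eventually.of_forall fun _ =>
    Finset.one_le_prod fun j _ => le_add_of_nonneg_right (by positivity)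

lemma qProdInf_eq_one_add_mul (hq0 : 0 < q) (hq1 : q < 1) (u : ℝ) :
    qProdInf q u = (1 + u) * qProdInf q (q * u) := by
  have hshift : (fun j : ℕ => 1 + q ^ (j + 1) * u) = fun j => 1 + q ^ j * (q * u) := by
    ext j; ring
  have htail : Multipliable fun j : ℕ => 1 + q ^ (j + 1) * u := by
    rw [hshift]; exact (hasProd_qProdInf hq0 hq1 (q * u)).multipliable
  rw [qProdInf, tprod_eq_zero_mul' (f := fun j : ℕ => 1 + q ^ j * u) htail, hshift, pow_zero,
    one_mul, qProdInf]

def eulerCoeff (q : ℝ) (k : ℕ) : ℝ := q ^ k.choose 2 / ((1 - q) ^ k * qFact q k)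

lemma eulerCoeff_pos (hq0 : 0 < q) (hq1 : q < 1) (k : ℕ) : 0 < eulerCoeff q k :=
  div_pos (pow_pos hq0 _) (mul_pos (pow_pos (by linarith) k) (qFact_pos hq0 k))

lemma eulerCoeff_zero : eulerCoeff q 0 = 1 := by
  simp [eulerCoeff, qFact]

lemma one_sub_pow_mul_eulerCoeff_succ (hq0 : 0 < q) (hq1 : q < 1) (k : ℕ) :
    (1 - q ^ (k + 1)) * eulerCoeff q (k + 1) = q ^ k * eulerCoeff q k := by
  have hchoose : (k + 1).choose 2 = k + k.choose 2 := by
    rw [Nat.choose_succ_succ', Nat.choose_one_right]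
  have hqInt := one_sub_mul_qInt q (k + 1)
  have hqk := (qInt_pos hq0 k.succ_ne_zero).ne'
  have h1q : 1 - q ≠ 0 := by linarith
  unfold eulerCoeff
  rw [← hqInt]
  simp only [qFact, hchoose, pow_add, pow_one]
  field_simp

lemma summable_eulerCoeff_mul_pow (hq0 : 0 < q) (hq1 : q < 1) (w : ℝ) :
    Summable fun k => eulerCoeff q k * w ^ k := by
  have h1q : 0 < 1 - q := by linarith
  have hsmall : ∀ᶠ k in atTop, q ^ k * |w| < (1 - q) / 2 :=
    ((tendsto_pow_atTop_nhds_zero_of_lt_one hq0.le hq1).mul_const |w|).eventually_lt_const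
      (by simpa using half_pos h1q)
  refine summable_of_ratio_norm_eventually_le (r := 1 / 2) (by norm_num) ?_
  filter_upwards [hsmall] with k hk
  have hrec := one_sub_pow_mul_eulerCoeff_succ hq0 hq1 k
  have he := eulerCoeff_pos hq0 hq1 k
  have he' := eulerCoeff_pos hq0 hq1 (k + 1)
  have hqk : q ^ (k + 1) ≤ q := pow_le_of_le_one hq0.le hq1.le k.succ_ne_zero
  simp only [norm_mul, norm_pow, Real.norm_eq_abs, abs_of_pos he, abs_of_pos he', pow_succ]
  have hdecay : eulerCoeff q (k + 1) * (1 - q) ≤ q ^ k * eulerCoeff q k := by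
    rw [← hrec, mul_comm]; exact mul_le_mul_of_nonneg_right (by linarith) he'.le
  refine le_of_mul_le_mul_right ?_ h1q
  calc eulerCoeff q (k + 1) * (|w| ^ k * |w|) * (1 - q)
      = eulerCoeff q (k + 1) * (1 - q) * (|w| ^ k * |w|) := by ring
    _ ≤ q ^ k * eulerCoeff q k * (|w| ^ k * |w|) := by gcongr
    _ = q ^ k * |w| * (eulerCoeff q k * |w| ^ k) := by ring
    _ ≤ (1 - q) / 2 * (eulerCoeff q k * |w| ^ k) := by gcongr
    _ = 1 / 2 * (eulerCoeff q k * |w| ^ k) * (1 - q) := by ring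

lemma tsum_eulerCoeff_mul_pow_eq (hq0 : 0 < q) (hq1 : q < 1) (w : ℝ) :
    ∑' k, eulerCoeff q k * w ^ k = (1 + w) * ∑' k, eulerCoeff q k * (q * w) ^ k := by
  have hs := summable_eulerCoeff_mul_pow hq0 hq1 w
  have hs' := summable_eulerCoeff_mul_pow hq0 hq1 (q * w)
  have hterm : ∀ k, eulerCoeff q (k + 1) * w ^ (k + 1) =
      eulerCoeff q (k + 1) * (q * w) ^ (k + 1) + w * (eulerCoeff q k * (q * w) ^ k) := by
    intro k
    linear_combination w ^ (k + 1) * (one_sub_pow_mul_eulerCoeff_succ hq0 hq1 k)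
  rw [hs.tsum_eq_zero_add, tsum_congr hterm,
    ((summable_nat_add_iff 1).2 hs').tsum_add (hs'.mul_left w), tsum_mul_left,
    hs'.tsum_eq_zero_add]
  simp only [eulerCoeff_zero, pow_zero]
  ring

lemma tsum_eulerCoeff_mul_pow_eq_qProd_mul (hq0 : 0 < q) (hq1 : q < 1) (v : ℝ) (N : ℕ) :
    ∑' k, eulerCoeff q k * v ^ k = qProd q v N * ∑' k, eulerCoeff q k * (q ^ N * v) ^ k := by
  induction N with
  | zero => simp [qProd]
  | succ N ih =>
    rw [ih, tsum_eulerCoeff_mul_pow_eq hq0 hq1 (q ^ N * v), ← mul_assoc q, ← pow_succ', qProd,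
      qProd, prod_range_succ, mul_assoc]

lemma tendsto_tsum_eulerCoeff_mul_pow_nhds_one (hq0 : 0 < q) (hq1 : q < 1) (v : ℝ) :
    Tendsto (fun N : ℕ => ∑' k, eulerCoeff q k * (q ^ N * v) ^ k) atTop (𝓝 1) := by
  have hlim : ∑' k, eulerCoeff q k * (0 : ℝ) ^ k = 1 := by
    rw [tsum_eq_single 0 fun k hk => by simp [hk], pow_zero, mul_one, eulerCoeff_zero]
  rw [← hlim]
  refine tendsto_tsum_of_dominated_convergence (summable_eulerCoeff_mul_pow hq0 hq1 |v|)
    (fun k => ?_) (Eventually.of_forall fun N k => ?_)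
  · have h : Tendsto (fun N : ℕ => q ^ N * v) atTop (𝓝 0) := by
      simpa using (tendsto_pow_atTop_nhds_zero_of_lt_one hq0.le hq1).mul_const v
    exact (h.pow k).const_mul _
  · rw [norm_mul, norm_pow, Real.norm_eq_abs, Real.norm_eq_abs,
      abs_of_pos (eulerCoeff_pos hq0 hq1 k), abs_mul, abs_of_pos (pow_pos hq0 N)]
    exact mul_le_mul_of_nonneg_left (pow_le_pow_left₀ (by positivity)
      (mul_le_of_le_one_left (abs_nonneg v) (pow_le_one₀ hq0.le hq1.le)) k)
      (eulerCoeff_pos hq0 hq1 k).le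

theorem hasSum_eulerCoeff_mul_pow (hq0 : 0 < q) (hq1 : q < 1) (v : ℝ) :
    HasSum (fun k => eulerCoeff q k * v ^ k) (qProdInf q v) := by
  have hlim : Tendsto (fun N => qProd q v N * ∑' k, eulerCoeff q k * (q ^ N * v) ^ k) atTop
      (𝓝 (qProdInf q v)) := by
    simpa [qProd] using (hasProd_qProdInf hq0 hq1 v).tendsto_prod_nat.mul
      (tendsto_tsum_eulerCoeff_mul_pow_nhds_one hq0 hq1 v)
  exact (summable_eulerCoeff_mul_pow hq0 hq1 v).hasSum_iff.2 (tendsto_nhds_unique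
    (tendsto_const_nhds.congr (tsum_eulerCoeff_mul_pow_eq_qProd_mul hq0 hq1 v)) hlim)

end Euler

section Weights

variable {q u : ℝ}

def lupasWeight (q : ℝ) (n : ℕ) (u : ℝ) (k : ℕ) : ℝ := gaussCoeff q n k * u ^ k / qProd q u n

def lupasWeightInf (q u : ℝ) (k : ℕ) : ℝ := eulerCoeff q k * u ^ k / qProdInf q u

lemma lupasWeight_nonneg (hq : 0 < q) (hu : 0 ≤ u) (n k : ℕ) : 0 ≤ lupasWeight q n u k :=
  div_nonneg (mul_nonneg (gaussCoeff_nonneg hq n k) (pow_nonneg hu k)) (qProd_pos hq hu n).le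

lemma lupasWeight_of_lt {n k : ℕ} (h : n < k) : lupasWeight q n u k = 0 := by
  rw [lupasWeight, gaussCoeff_of_lt h, zero_mul, zero_div]

lemma lupasWeightInf_nonneg (hq0 : 0 < q) (hq1 : q < 1) (hu : 0 ≤ u) (k : ℕ) :
    0 ≤ lupasWeightInf q u k :=
  div_nonneg (mul_nonneg (eulerCoeff_pos hq0 hq1 k).le (pow_nonneg hu k))
    (zero_le_one.trans (one_le_qProdInf hq0 hq1 hu))

lemma hasSum_lupasWeightInf (hq0 : 0 < q) (hq1 : q < 1) (hu : 0 ≤ u) :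
    HasSum (lupasWeightInf q u) 1 := by
  have h := (hasSum_eulerCoeff_mul_pow hq0 hq1 u).div_const (qProdInf q u)
  rwa [div_self (zero_lt_one.trans_le (one_le_qProdInf hq0 hq1 hu)).ne'] at h

lemma hasSum_lupasWeightInf_mul_pow (hq0 : 0 < q) (hq1 : q < 1) (hu : 0 ≤ u) :
    HasSum (fun m => lupasWeightInf q u m * q ^ m) (1 / (1 + u)) := by
  have hP := zero_lt_one.trans_le (one_le_qProdInf hq0 hq1 (mul_nonneg hq0.le hu))
  have hsum := (hasSum_eulerCoeff_mul_pow hq0 hq1 (q * u)).div_const (qProdInf q u)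
  rw [qProdInf_eq_one_add_mul hq0 hq1 u, div_mul_cancel_right₀ hP.ne'] at hsum
  have hterm : (fun m => lupasWeightInf q u m * q ^ m) =
      fun m => eulerCoeff q m * (q * u) ^ m / ((1 + u) * qProdInf q (q * u)) := by
    ext m
    rw [lupasWeightInf, qProdInf_eq_one_add_mul hq0 hq1 u, mul_pow]
    ring
  rwa [hterm, one_div]

lemma hasSum_lupasWeightInf_mul_one_sub_pow (hq0 : 0 < q) (hq1 : q < 1) (hu : 0 ≤ u) :
    HasSum (fun m => lupasWeightInf q u m * (1 - q ^ m)) (u / (1 + u)) := by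
  have h := (hasSum_lupasWeightInf hq0 hq1 hu).sub (hasSum_lupasWeightInf_mul_pow hq0 hq1 hu)
  rw [show (1 : ℝ) - 1 / (1 + u) = u / (1 + u) by field_simp; ring] at h
  simpa only [mul_sub, mul_one] using h

open PowerSeries in
lemma C_one_add_mul_mk_lupasWeightInf (hq0 : 0 < q) (hq1 : q < 1) (hu : 0 ≤ u) :
    C (1 + u) * PowerSeries.mk (lupasWeightInf q u) =
      (1 + C u * X) * PowerSeries.mk (lupasWeightInf q (q * u)) := by
  ext m
  rw [coeff_C_mul, coeff_mk]
  conv_rhs => rw [add_mul, one_mul, mul_assoc, map_add, coeff_C_mul, coeff_mk]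
  rw [lupasWeightInf, lupasWeightInf, qProdInf_eq_one_add_mul hq0 hq1 u]
  rcases m with _ | m
  · rw [coeff_zero_X_mul]
    field_simp
    ring
  · rw [coeff_succ_X_mul, coeff_mk, lupasWeightInf]
    field_simp
    congr 1
    linear_combination u ^ (m + 1) * (one_sub_pow_mul_eulerCoeff_succ hq0 hq1 m)

open PowerSeries in
lemma C_qProd_mul_mk_lupasWeightInf (hq0 : 0 < q) (hq1 : q < 1) (hu : 0 ≤ u) (n : ℕ) :
    C (qProd q u n) * PowerSeries.mk (lupasWeightInf q u) =
      (∏ j ∈ range n, (1 + C (q ^ j * u) * X)) *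
        PowerSeries.mk (lupasWeightInf q (q ^ n * u)) := by
  induction n with
  | zero => simp [qProd]
  | succ n ih =>
    set w := q ^ n * u
    calc C (qProd q u (n + 1)) * PowerSeries.mk (lupasWeightInf q u)
        = C (1 + w) * (C (qProd q u n) * PowerSeries.mk (lupasWeightInf q u)) := by
          rw [qProd, prod_range_succ, map_mul, ← qProd]; ring
      _ = (∏ j ∈ range n, (1 + C (q ^ j * u) * X)) *
            (C (1 + w) * PowerSeries.mk (lupasWeightInf q w)) := by
          rw [ih]; ring
      _ = (∏ j ∈ range (n + 1), (1 + C (q ^ j * u) * X)) *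
            PowerSeries.mk (lupasWeightInf q (q ^ (n + 1) * u)) := by
          rw [C_one_add_mul_mk_lupasWeightInf hq0 hq1 (by positivity), prod_range_succ,
            pow_succ', mul_assoc q]
          ring

lemma lupasWeightInf_eq_sum_antidiagonal (hq0 : 0 < q) (hq1 : q < 1) (hu : 0 ≤ u) (n j : ℕ) :
    lupasWeightInf q u j =
      ∑ p ∈ antidiagonal j, lupasWeight q n u p.1 * lupasWeightInf q (q ^ n * u) p.2 := by
  have h := congrArg (PowerSeries.coeff j) (C_qProd_mul_mk_lupasWeightInf hq0 hq1 hu n)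
  rw [PowerSeries.coeff_C_mul, PowerSeries.coeff_mk, PowerSeries.coeff_mul] at h
  simp only [coeff_prod_one_add_C_mul_X hq0, PowerSeries.coeff_mk] at h
  rw [← mul_right_inj' (qProd_pos hq0 hu n).ne', h, mul_sum]
  refine sum_congr rfl fun p _ => ?_
  rw [lupasWeight]
  field_simp [(qProd_pos hq0 hu n).ne']

end Weights

lemma tsum_sum_antidiagonal {E : Type*} [NormedAddCommGroup E] [CompleteSpace E]
    {F : ℕ × ℕ → E} (hF : Summable F) :
    ∑' j, ∑ p ∈ antidiagonal j, F p = ∑' p, F p := by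
  let e := HasAntidiagonal.sigmaAntidiagonalEquivProd (A := ℕ)
  calc ∑' j, ∑ p ∈ antidiagonal j, F p = ∑' j, ∑' p : antidiagonal j, F (e ⟨j, p⟩) := by
        refine tsum_congr fun j => ?_
        rw [tsum_fintype]
        exact (sum_coe_sort (antidiagonal j) F).symm
    _ = ∑' c, F (e c) :=
        (((e.summable_iff).2 hF).tsum_sigma' fun j => (hasSum_fintype _).summable).symm
    _ = ∑' p, F p := e.tsum_eq F

lemma tsum_mul_sum_antidiagonal {a b g : ℕ → ℝ} (ha : Summable a) (hb : Summable b)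
    (ha0 : 0 ≤ a) (hb0 : 0 ≤ b) {C : ℝ} (hg : ∀ j, |g j| ≤ C) :
    ∑' j, g j * ∑ p ∈ antidiagonal j, a p.1 * b p.2 = ∑' k, a k * ∑' m, g (k + m) * b m := by
  set F : ℕ × ℕ → ℝ := fun p => g (p.1 + p.2) * (a p.1 * b p.2)
  have hF : Summable F := by
    refine ((ha.mul_of_nonneg hb ha0 hb0).mul_left C).of_norm_bounded fun p => ?_
    rw [Real.norm_eq_abs, abs_mul, abs_of_nonneg (mul_nonneg (ha0 _) (hb0 _))]
    exact mul_le_mul_of_nonneg_right (hg _) (mul_nonneg (ha0 _) (hb0 _))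
  calc ∑' j, g j * ∑ p ∈ antidiagonal j, a p.1 * b p.2
      = ∑' j, ∑ p ∈ antidiagonal j, F p := by
        refine tsum_congr fun j => ?_
        rw [mul_sum]
        exact sum_congr rfl fun p hp => by simp only [F, mem_antidiagonal.1 hp]
    _ = ∑' k, ∑' m, F (k, m) := by
        rw [tsum_sum_antidiagonal hF, hF.tsum_prod' fun k => hF.prod_factor k]
    _ = ∑' k, a k * ∑' m, g (k + m) * b m := by
        refine tsum_congr fun k => ?_
        rw [← tsum_mul_left]
        exact tsum_congr fun m => by ring

section Factorization

variable {q u : ℝ}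

lemma tsum_mul_lupasWeightInf_eq_sum (hq0 : 0 < q) (hq1 : q < 1) (hu : 0 ≤ u) (n : ℕ)
    {g : ℕ → ℝ} {C : ℝ} (hg : ∀ j, |g j| ≤ C) :
    ∑' j, g j * lupasWeightInf q u j = ∑ k ∈ range (n + 1),
      lupasWeight q n u k * ∑' m, g (k + m) * lupasWeightInf q (q ^ n * u) m := by
  have hfin : ∀ k ∉ range (n + 1), lupasWeight q n u k = 0 := fun k hk =>
    lupasWeight_of_lt (by simpa using hk)
  rw [tsum_congr fun j => by rw [lupasWeightInf_eq_sum_antidiagonal hq0 hq1 hu n j],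
    tsum_mul_sum_antidiagonal (summable_of_ne_finset_zero hfin)
      (hasSum_lupasWeightInf hq0 hq1 (by positivity)).summable (lupasWeight_nonneg hq0 hu n)
      (lupasWeightInf_nonneg hq0 hq1 (by positivity)) hg,
    tsum_eq_sum fun k hk => by rw [hfin k hk, zero_mul]]

lemma sum_lupasWeight (hq0 : 0 < q) (hq1 : q < 1) (hu : 0 ≤ u) (n : ℕ) :
    ∑ k ∈ range (n + 1), lupasWeight q n u k = 1 := by
  have h := tsum_mul_lupasWeightInf_eq_sum hq0 hq1 hu n (g := fun _ => 1) (C := 1) (by simp)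
  simpa [(hasSum_lupasWeightInf hq0 hq1 hu).tsum_eq,
    (hasSum_lupasWeightInf hq0 hq1 (by positivity : 0 ≤ q ^ n * u)).tsum_eq] using h.symm

end Factorization

section ModulusOfContinuity

variable {f : ℝ → ℝ}

lemma bddAbove_omega1_set (hf : ContinuousOn f (Set.Icc 0 1)) (t : ℝ) :
    BddAbove {d | ∃ x ∈ Set.Icc (0:ℝ) 1, ∃ y ∈ Set.Icc (0:ℝ) 1, |x - y| ≤ t ∧ d = |f x - f y|} := by
  obtain ⟨C, hC⟩ := isCompact_Icc.exists_bound_of_continuousOn hf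
  refine ⟨C + C, ?_⟩
  rintro _ ⟨x, hx, y, hy, -, rfl⟩
  exact (abs_sub _ _).trans (add_le_add (hC x hx) (hC y hy))

lemma abs_sub_le_omega1 (hf : ContinuousOn f (Set.Icc 0 1)) {x y t : ℝ}
    (hx : x ∈ Set.Icc (0:ℝ) 1) (hy : y ∈ Set.Icc (0:ℝ) 1) (hxy : |x - y| ≤ t) :
    |f x - f y| ≤ omega1 f t :=
  le_csSup (bddAbove_omega1_set hf t) ⟨x, hx, y, hy, hxy, rfl⟩

lemma omega1_nonneg (hf : ContinuousOn f (Set.Icc 0 1)) {t : ℝ} (ht : 0 ≤ t) :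
    0 ≤ omega1 f t :=
  (abs_nonneg _).trans (abs_sub_le_omega1 hf (Set.left_mem_Icc.2 zero_le_one)
    (Set.left_mem_Icc.2 zero_le_one) (by simpa using ht))

lemma abs_sub_le_nat_mul_omega1 (hf : ContinuousOn f (Set.Icc 0 1)) {ε : ℝ} (hε : 0 ≤ ε)
    (m : ℕ) {x y : ℝ} (hx : x ∈ Set.Icc (0:ℝ) 1) (hy : y ∈ Set.Icc (0:ℝ) 1)
    (hxy : |x - y| ≤ m * ε) : |f x - f y| ≤ m * omega1 f ε := by
  induction m generalizing x y with
  | zero =>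
    rw [Nat.cast_zero, zero_mul, abs_nonpos_iff, sub_eq_zero] at hxy
    simp [hxy]
  | succ m ih =>
    wlog hyx : y ≤ x generalizing x y
    · rw [abs_sub_comm]
      exact this hy hx (by rwa [abs_sub_comm]) (by linarith)
    -- step from `y` towards `x` by at most `ε`, leaving a gap of at most `m * ε`
    set z := min (y + ε) x
    have hxy' := (abs_le.1 hxy).2
    push_cast at hxy'
    have hyz : y ≤ z := le_min (by linarith) hyx
    have hzx : z ≤ x := min_le_right _ _
    have hz : z ∈ Set.Icc (0:ℝ) 1 := ⟨hy.1.trans hyz, hzx.trans hx.2⟩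
    have hxz : x - m * ε ≤ z :=
      le_min (by linarith) (sub_le_self _ (mul_nonneg m.cast_nonneg hε))
    have h1 := ih hx hz (by rw [abs_of_nonneg (sub_nonneg.2 hzx)]; linarith)
    have h2 := abs_sub_le_omega1 (t := ε) hf hz hy
      (by rw [abs_of_nonneg (sub_nonneg.2 hyz)]; linarith [min_le_left (y + ε) x])
    calc |f x - f y| ≤ |f x - f z| + |f z - f y| := abs_sub_le _ _ _
      _ ≤ m * omega1 f ε + omega1 f ε := add_le_add h1 h2
      _ = ((m + 1 : ℕ) : ℝ) * omega1 f ε := by push_cast; ring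

lemma abs_sub_le_one_add_div_mul_omega1 (hf : ContinuousOn f (Set.Icc 0 1)) {ε : ℝ} (hε : 0 < ε)
    {x y : ℝ} (hx : x ∈ Set.Icc (0:ℝ) 1) (hy : y ∈ Set.Icc (0:ℝ) 1) :
    |f x - f y| ≤ (1 + |x - y| / ε) * omega1 f ε := by
  have hratio : 0 ≤ |x - y| / ε := div_nonneg (abs_nonneg _) hε.le
  have hceil : |x - y| ≤ ⌈|x - y| / ε⌉₊ * ε := (div_le_iff₀ hε).1 (Nat.le_ceil _)
  refine (abs_sub_le_nat_mul_omega1 hf hε.le _ hx hy hceil).trans ?_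
  exact mul_le_mul_of_nonneg_right (by linarith [Nat.ceil_lt_add_one hratio])
    (omega1_nonneg hf hε.le)

lemma abs_sub_tsum_le_omega1 (hf : ContinuousOn f (Set.Icc 0 1)) {ε : ℝ} (hε : 0 < ε)
    {p : ℕ → ℝ} (hp0 : 0 ≤ p) (hp : HasSum p 1) {x : ℝ} (hx : x ∈ Set.Icc (0:ℝ) 1)
    {y d : ℕ → ℝ} (hy : ∀ m, y m ∈ Set.Icc (0:ℝ) 1) (hd : ∀ m, |x - y m| ≤ d m) {D : ℝ}
    (hD : HasSum (fun m => p m * d m) D) :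
    |f x - ∑' m, f (y m) * p m| ≤ (1 + D / ε) * omega1 f ε := by
  obtain ⟨C, hC⟩ := isCompact_Icc.exists_bound_of_continuousOn hf
  have hfy : Summable fun m => f (y m) * p m :=
    (hp.summable.mul_left C).of_norm_bounded fun m => by
      rw [norm_mul, Real.norm_of_nonneg (hp0 m)]
      exact mul_le_mul_of_nonneg_right (hC _ (hy m)) (hp0 m)
  have hdiff : HasSum (fun m => (f x - f (y m)) * p m) (f x - ∑' m, f (y m) * p m) := by
    simpa only [mul_one, sub_mul] using (hp.mul_left (f x)).sub hfy.hasSum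
  set ω := omega1 f ε
  have hbound : HasSum (fun m => ω * p m + ω / ε * (p m * d m)) ((1 + D / ε) * ω) := by
    rw [show (1 + D / ε) * ω = ω * 1 + ω / ε * D by ring]
    exact (hp.mul_left ω).add (hD.mul_left (ω / ε))
  have hterm : ∀ m, |(f x - f (y m)) * p m| ≤ ω * p m + ω / ε * (p m * d m) := fun m => by
    rw [abs_mul, abs_of_nonneg (hp0 m)]
    calc |f x - f (y m)| * p m ≤ (1 + |x - y m| / ε) * ω * p m :=
          mul_le_mul_of_nonneg_right (abs_sub_le_one_add_div_mul_omega1 hf hε hx (hy m)) (hp0 m)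
      _ ≤ (1 + d m / ε) * ω * p m := by
          gcongr
          · exact hp0 m
          · exact omega1_nonneg hf hε.le
          · exact hd m
      _ = ω * p m + ω / ε * (p m * d m) := by ring
  exact abs_le.2 ⟨hasSum_le (fun m => neg_le_of_abs_le (hterm m)) hbound.neg hdiff,
    hasSum_le (fun m => le_of_abs_le (hterm m)) hdiff hbound⟩

end ModulusOfContinuity

section LupasOperators

variable {q x : ℝ}

lemma lupasB_eq_lupasWeight (hx : x ≠ 1) {n k : ℕ} (hn : n ≠ 0) (hk : k ≤ n) :
    lupasB q n k x = lupasWeight q n (x / (1 - x)) k := by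
  obtain ⟨m, rfl⟩ : ∃ m, n = m + 1 := Nat.exists_eq_succ_of_ne_zero hn
  have h1x : 1 - x ≠ 0 := sub_ne_zero.2 hx.symm
  set u := x / (1 - x) with hu
  set Q := ∏ j ∈ range m, (1 + q ^ (j + 1) * u)
  have hden : ∏ j ∈ range (m + 1 - 1), (1 - x + q ^ (j + 1) * x) = (1 - x) ^ m * Q := by
    rw [Nat.add_sub_cancel, ← card_range m, ← prod_const, ← prod_mul_distrib, card_range]
    exact prod_congr rfl fun j _ => by rw [hu]; field_simp
  have hqProd : qProd q u (m + 1) = (1 - x)⁻¹ * Q := by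
    rw [qProd, prod_range_succ', pow_zero, one_mul, mul_comm, hu]
    congr 1
    field_simp
    ring
  rw [lupasB, lupasWeight, gaussCoeff, if_pos hk, hden, hqProd, ← Nat.choose_two_right,
    pow_sub₀ _ h1x hk, hu, div_pow, pow_succ]
  field_simp

lemma lupasR_eq_sum_lupasWeight (hq : q ≠ 1) (hx : x ≠ 1) {n : ℕ} (hn : n ≠ 0)
    (f : ℝ → ℝ) : lupasR q n f x =
      ∑ k ∈ range (n + 1), f ((1 - q ^ k) / (1 - q ^ n)) * lupasWeight q n (x / (1 - x)) k :=
  sum_congr rfl fun k hk => by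
    rw [qInt_div_qInt hq, lupasB_eq_lupasWeight hx hn (Nat.lt_succ_iff.1 (mem_range.1 hk))]

lemma lupasRInf_eq_tsum (hq : q ≤ 1) (hx : x ≠ 1) (f : ℝ → ℝ) :
    lupasRInf q f x = ∑' j, f (1 - q ^ j) * lupasWeightInf q (x / (1 - x)) j := by
  rw [lupasRInf, if_neg hq.not_gt, lupasRInfLow, if_neg hx]
  refine tsum_congr fun j => ?_
  rw [lupasBInf, lupasWeightInf, eulerCoeff, qProdInf, Nat.choose_two_right]
  ring

end LupasOperators

lemma abs_one_sub_div_sub_one_sub_mul_le {a b ε : ℝ} (ha0 : 0 ≤ a) (ha1 : a ≤ 1) (hb1 : b ≤ 1)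
    (hε0 : 0 ≤ ε) (hε1 : ε < 1) :
    |(1 - a) / (1 - ε) - (1 - a * b)| ≤ ε / (1 - ε) + (1 - b) := by
  have h1ε : 0 < 1 - ε := by linarith
  have hsplit : (1 - a) / (1 - ε) - (1 - a * b) = (1 - a) * (ε / (1 - ε)) - a * (1 - b) := by
    field_simp
    ring
  have hε' : 0 ≤ ε / (1 - ε) := div_nonneg hε0 h1ε.le
  have hX := mul_le_of_le_one_left hε' (by linarith : 1 - a ≤ 1)
  have hY := mul_le_of_le_one_left (by linarith : 0 ≤ 1 - b) ha1
  rw [hsplit, abs_le]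
  constructor <;> linarith [mul_nonneg (by linarith : 0 ≤ 1 - a) hε',
    mul_nonneg ha0 (by linarith : 0 ≤ 1 - b)]

lemma abs_sub_tsum_lupasWeightInf_le {f : ℝ → ℝ} (hf : ContinuousOn f (Set.Icc 0 1)) {q : ℝ}
    (hq0 : 0 < q) (hq1 : q < 1) {n : ℕ} (hn : n ≠ 0) {u : ℝ} (hu : 0 ≤ u) {k : ℕ} (hk : k ≤ n) :
    |f ((1 - q ^ k) / (1 - q ^ n)) - ∑' m, f (1 - q ^ (k + m)) * lupasWeightInf q (q ^ n * u) m|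
      ≤ (1 + 1 / (1 - q ^ n) + u) * omega1 f (q ^ n) := by
  set ε := q ^ n
  set v := ε * u
  have hε : 0 < ε := pow_pos hq0 n
  have hε1 : ε < 1 := pow_lt_one₀ hq0.le hq1 hn
  have hv : 0 ≤ v := by positivity
  have hpow : ∀ i, 0 ≤ q ^ i ∧ q ^ i ≤ 1 := fun i =>
    ⟨pow_nonneg hq0.le i, pow_le_one₀ hq0.le hq1.le⟩
  have hx : (1 - q ^ k) / (1 - ε) ∈ Set.Icc (0:ℝ) 1 :=
    ⟨div_nonneg (by linarith [hpow k]) (by linarith), (div_le_one (by linarith)).2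
      (by linarith [pow_le_pow_of_le_one hq0.le hq1.le hk])⟩
  have hy : ∀ m, 1 - q ^ (k + m) ∈ Set.Icc (0:ℝ) 1 := fun m =>
    ⟨by linarith [hpow (k + m)], by linarith [hpow (k + m)]⟩
  have hd : ∀ m, |(1 - q ^ k) / (1 - ε) - (1 - q ^ (k + m))| ≤ ε / (1 - ε) + (1 - q ^ m) :=
    fun m => by
      rw [pow_add]
      exact abs_one_sub_div_sub_one_sub_mul_le (hpow k).1 (hpow k).2 (hpow m).2 hε.le hε1
  have hD : HasSum (fun m => lupasWeightInf q v m * (ε / (1 - ε) + (1 - q ^ m)))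
      (ε / (1 - ε) + v / (1 + v)) := by
    have h := ((hasSum_lupasWeightInf hq0 hq1 hv).mul_left (ε / (1 - ε))).add
      (hasSum_lupasWeightInf_mul_one_sub_pow hq0 hq1 hv)
    simpa only [mul_add, mul_one, one_mul, mul_comm (ε / (1 - ε))] using h
  refine (abs_sub_tsum_le_omega1 hf hε (lupasWeightInf_nonneg hq0 hq1 hv)
    (hasSum_lupasWeightInf hq0 hq1 hv) hx hy hd hD).trans
    (mul_le_mul_of_nonneg_right ?_ (omega1_nonneg hf hε.le))
  calc 1 + (ε / (1 - ε) + v / (1 + v)) / ε ≤ 1 + (ε / (1 - ε) + v) / ε := by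
        gcongr
        exact div_le_self hv (by linarith)
    _ = 1 + 1 / (1 - ε) + u := by
        field_simp
        ring

lemma abs_sum_mul_le_of_abs_le {ι : Type*} {s : Finset ι} {w a : ι → ℝ} (hw0 : ∀ k ∈ s, 0 ≤ w k)
    (hw1 : ∑ k ∈ s, w k = 1) {B : ℝ} (ha : ∀ k ∈ s, |a k| ≤ B) : |∑ k ∈ s, w k * a k| ≤ B :=
  calc |∑ k ∈ s, w k * a k| ≤ ∑ k ∈ s, w k * B := (abs_sum_le_sum_abs _ _).trans <|
        sum_le_sum fun k hk => by
          rw [abs_mul, abs_of_nonneg (hw0 k hk)]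
          exact mul_le_mul_of_nonneg_left (ha k hk) (hw0 k hk)
    _ = B := by rw [← sum_mul, hw1, one_mul]

lemma one_add_one_div_one_sub_pow_add_le {q : ℝ} (hq0 : 0 < q) (hq1 : q < 1) {n : ℕ}
    (hn : n ≠ 0) {u : ℝ} (hu : 0 ≤ u) : 1 + 1 / (1 - q ^ n) + u ≤ 2 / (1 - q) * (1 + u) := by
  have h1 : 1 / (1 - q ^ n) ≤ 1 / (1 - q) :=
    one_div_le_one_div_of_le (by linarith) (by linarith [pow_le_of_le_one hq0.le hq1.le hn])
  have h2 : 1 ≤ 1 / (1 - q) := by rw [le_div_iff₀ (by linarith)]; linarith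
  rw [show 2 / (1 - q) * (1 + u) = 1 / (1 - q) + 1 / (1 - q) + 2 * (u * (1 / (1 - q))) by ring]
  linarith [mul_le_mul_of_nonneg_left h2 hu]

theorem lupasR_rate_omega1 (q : ℝ) (hq0 : 0 < q) (hq1 : q < 1) (f : ℝ → ℝ)
    (hf : ContinuousOn f (Set.Icc 0 1)) (n : ℕ) (hn : 1 ≤ n)
    (x : ℝ) (hx : x ∈ Set.Ico (0:ℝ) 1) :
    |lupasR q n f x - lupasRInf q f x| ≤ 2 / (1 - q) * (1 / (1 - x)) * omega1 f (q ^ n) := by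
  obtain ⟨hx0, hx1⟩ := hx
  have hn0 : n ≠ 0 := Nat.one_le_iff_ne_zero.1 hn
  have hu : 0 ≤ x / (1 - x) := div_nonneg hx0 (by linarith)
  obtain ⟨C, hC⟩ := isCompact_Icc.exists_bound_of_continuousOn hf
  have hfC : ∀ j : ℕ, |f (1 - q ^ j)| ≤ C := fun j =>
    hC _ ⟨by linarith [pow_le_one₀ (n := j) hq0.le hq1.le], by linarith [pow_pos hq0 j]⟩
  rw [lupasR_eq_sum_lupasWeight hq1.ne hx1.ne hn0, lupasRInf_eq_tsum hq1.le hx1.ne,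
    tsum_mul_lupasWeightInf_eq_sum hq0 hq1 hu n hfC, ← sum_sub_distrib]
  simp_rw [mul_comm (f _) (lupasWeight _ _ _ _), ← mul_sub]
  refine (abs_sum_mul_le_of_abs_le (fun k _ => lupasWeight_nonneg hq0 hu n k)
    (sum_lupasWeight hq0 hq1 hu n)
    fun k hk => abs_sub_tsum_lupasWeightInf_le hf hq0 hq1 hn0 hu
      (Nat.lt_succ_iff.1 (mem_range.1 hk))).trans
    (mul_le_mul_of_nonneg_right ?_ (omega1_nonneg hf (pow_pos hq0 n).le))
  rw [show 1 / (1 - x) = 1 + x / (1 - x) by field_simp; ring]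
  exact one_add_one_div_one_sub_pow_add_le hq0 hq1 hn0 hu
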